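/- arXiv:math/0604492 — 5 statements merged into one kernel-verified Lean document; each statement's English description precedes it below -/
import Mathlib

section
/- Let G be a discrete finitely generated group, let (X, G) be a minimal topological dynamical system, and let π : X → ←G be an almost 1-1 factor map onto a subodometer ←G = lim_{←n}(G/Γ_n, π_n) (so that ←G is the maximal equicontinuous factor of X). Then a group homomorphism χ : G → S¹ admits a nonzero continuous eigenfunction on X — i.e., a continuous f : X → ℂ, f not identically 0, with f(g·x) = χ(g) f(x) for all x ∈ X and g ∈ G — if and only if there exists n ≥ 0 such that χ(γ) = 1 for all γ ∈ Γ_n. -/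
open Pointwise MeasureTheory

/-- Compatibility condition defining the inverse limit `lim_{←i} (G/Γᵢ, πᵢ)`:
a sequence of cosets is compatible if any representative of the `(i+1)`-th coordinate
also represents the `i`-th coordinate. -/
def Compat {G : Type*} [Group G] (Γ : ℕ → Subgroup G) (x : ∀ i, G ⧸ Γ i) : Prop :=
  ∀ (i : ℕ) (g : G),
    (QuotientGroup.mk g : G ⧸ Γ (i + 1)) = x (i + 1) →
    (QuotientGroup.mk g : G ⧸ Γ i) = x i

/-- The subodometer `←G = lim_{←i} (G/Γᵢ, πᵢ)` associated to a sequence of subgroups. -/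
def Subodometer {G : Type*} [Group G] (Γ : ℕ → Subgroup G) : Type _ :=
  { x : ∀ i, G ⧸ Γ i // Compat Γ x }

/-- Topology of the subodometer: subspace topology of the product of the (discrete)
coset spaces. -/
instance {G : Type*} [Group G] (Γ : ℕ → Subgroup G) [TopologicalSpace G] :
    TopologicalSpace (Subodometer Γ) :=
  instTopologicalSpaceSubtype

lemma compat_smul {G : Type*} [Group G] (Γ : ℕ → Subgroup G) (g : G) (x : ∀ i, G ⧸ Γ i)
    (hx : Compat Γ x) : Compat Γ (fun i => g • x i) := by
  intro i h hh
  change (QuotientGroup.mk h : G ⧸ Γ (i + 1)) = g • x (i + 1) at hh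
  show (QuotientGroup.mk h : G ⧸ Γ i) = g • x i
  obtain ⟨a, ha⟩ := QuotientGroup.mk_surjective (x (i + 1))
  have h1 : (QuotientGroup.mk (g * a) : G ⧸ Γ (i + 1)) = g • x (i + 1) := by
    rw [← ha]; rfl
  rw [← h1] at hh
  have h2 : (QuotientGroup.mk (g⁻¹ * h) : G ⧸ Γ (i + 1)) = QuotientGroup.mk a := by
    rw [QuotientGroup.eq] at hh ⊢
    simpa [mul_assoc] using hh
  have h3 := hx i _ (h2.trans ha)
  have h4 : (QuotientGroup.mk (g * (g⁻¹ * h)) : G ⧸ Γ i) = g • x i := by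
    rw [show (QuotientGroup.mk (g * (g⁻¹ * h)) : G ⧸ Γ i)
        = g • (QuotientGroup.mk (g⁻¹ * h) : G ⧸ Γ i) from rfl, h3]
  simpa [mul_assoc] using h4

/-- The action of `G` on the subodometer by coordinatewise left multiplication. -/
instance {G : Type*} [Group G] (Γ : ℕ → Subgroup G) : MulAction G (Subodometer Γ) where
  smul g x := ⟨fun i => g • x.1 i, compat_smul Γ g x.1 x.2⟩
  one_smul x := Subtype.ext (funext fun i => one_smul G (x.1 i))
  mul_smul g h x := Subtype.ext (funext fun i => mul_smul g h (x.1 i))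

/-- The distinguished point `e` of the subodometer: the sequence of cosets of the
neutral element. -/
def odoE {G : Type*} [Group G] (Γ : ℕ → Subgroup G) (hΓ : ∀ i, Γ (i + 1) ≤ Γ i) :
    Subodometer Γ :=
  ⟨fun i => QuotientGroup.mk 1, by
    intro i g hg
    rw [QuotientGroup.eq] at hg ⊢
    exact hΓ i hg⟩

/-- The canonical map `τ : G → ←G`, `τ(g) = (gΓᵢ)ᵢ`. -/
def odoTau {G : Type*} [Group G] (Γ : ℕ → Subgroup G) (hΓ : ∀ i, Γ (i + 1) ≤ Γ i) (g : G) :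
    Subodometer Γ :=
  ⟨fun i => QuotientGroup.mk g, by
    intro i h hh
    rw [QuotientGroup.eq] at hh ⊢
    exact hΓ i hh⟩

/-- A factor map between two `G`-systems: a continuous surjection commuting with the
`G`-actions. -/
def IsFactorMap (G : Type*) {X Y : Type*} [Group G] [TopologicalSpace X] [TopologicalSpace Y]
    [MulAction G X] [MulAction G Y] (π : X → Y) : Prop :=
  Continuous π ∧ Function.Surjective π ∧ ∀ (g : G) (x : X), π (g • x) = g • π x

/-
Let `z` be the point with singleton fibre over `y`. By minimality `f z ≠ 0`, and
`f (g • z) / f z = χ g`, so `χ g` lies in the right half-plane whenever `g • z` is close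
to `z`. By compactness, the preimages of the cylinders `{w | wₙ = yₙ}` shrink into any
neighbourhood of `z`, and every `δ ∈ Γₙ` has a conjugate fixing `yₙ`; hence `χ(Γₙ)` is a
subgroup of the circle inside the right half-plane, which is trivial. Conversely, a
character trivial on `Γₙ` descends to `G ⧸ Γₙ`, and its composite with `x ↦ (π x)ₙ` is a
locally constant eigenfunction.
-/

open Set

theorem Circle.eq_one_of_forall_pow_re_pos {z : Circle} (h : ∀ n : ℕ, 0 < (z ^ n : ℂ).re) :
    z = 1 :=
  Circle.eq_one_of_forall_pow_mem_centeredArc_pi_div_two fun n _ => by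
    rw [Circle.mem_centeredArc (by linarith [Real.pi_pos]), Complex.abs_arg_lt_pi_div_two_iff]
    exact Or.inl (h n)

theorem MonoidHom.eq_one_of_forall_re_pos {G : Type*} [Group G] (χ : G →* Circle)
    (H : Subgroup G) (h : ∀ γ ∈ H, 0 < (χ γ : ℂ).re) : ∀ γ ∈ H, χ γ = 1 :=
  fun γ hγ => Circle.eq_one_of_forall_pow_re_pos fun n => by
    simpa only [map_pow, Circle.coe_pow] using h (γ ^ n) (pow_mem hγ n)

theorem eq_zero_of_apply_eq_zero_of_dense_orbit {G X R : Type*} [Monoid G] [MulAction G X]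
    [TopologicalSpace X] [TopologicalSpace R] [T2Space R] [MulZeroClass R] {f : X → R}
    (hf : Continuous f) (c : G → R) (heig : ∀ (g : G) (x : X), f (g • x) = c g * f x) {z : X}
    (hz : Dense (range fun g : G => g • z)) (h0 : f z = 0) : f = 0 :=
  hf.ext_on hz continuous_const <| by
    rintro _ ⟨g, rfl⟩
    simp [heig, h0]

section CosetLift

variable {G M : Type*} [Group G] [Monoid M] (χ : G →* M) {H : Subgroup G}

def MonoidHom.cosetLift (hH : H ≤ χ.ker) : G ⧸ H → M :=
  Quotient.lift χ fun a b hab => by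
    rw [← mul_inv_cancel_left a b, map_mul,
      hH (QuotientGroup.leftRel_apply.mp hab), mul_one]

theorem MonoidHom.cosetLift_smul (hH : H ≤ χ.ker) (g : G) (q : G ⧸ H) :
    χ.cosetLift hH (g • q) = χ g * χ.cosetLift hH q := by
  induction q using QuotientGroup.induction_on with
  | H a => exact map_mul χ g a

end CosetLift

instance QuotientGroup.discreteTopology_of_discreteTopology {G : Type*} [Group G]
    [TopologicalSpace G] [DiscreteTopology G] (H : Subgroup G) : DiscreteTopology (G ⧸ H) :=
  QuotientGroup.discreteTopology (isOpen_discrete _)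

namespace Subodometer

variable {G : Type*} [Group G] {Γ : ℕ → Subgroup G}

@[simp]
theorem smul_val_apply (g : G) (x : Subodometer Γ) (n : ℕ) : (g • x).1 n = g • x.1 n :=
  rfl

theorem coord_eq_of_coord_succ_eq {x y : Subodometer Γ} {n : ℕ}
    (h : x.1 (n + 1) = y.1 (n + 1)) : x.1 n = y.1 n := by
  obtain ⟨g, hg⟩ := QuotientGroup.mk_surjective (x.1 (n + 1))
  exact (x.2 n g hg).symm.trans (y.2 n g (hg.trans h))

theorem coord_eq_of_le {x y : Subodometer Γ} {m n : ℕ} (hmn : m ≤ n)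
    (h : x.1 n = y.1 n) : x.1 m = y.1 m := by
  induction n, hmn using Nat.le_induction with
  | base => exact h
  | succ n _ ih => exact ih (coord_eq_of_coord_succ_eq h)

def cylinder (y : Subodometer Γ) (n : ℕ) : Set (Subodometer Γ) :=
  {x | x.1 n = y.1 n}

theorem cylinder_anti (y : Subodometer Γ) : Antitone (cylinder y) :=
  fun _ _ hmn _ hx => coord_eq_of_le hmn hx

theorem iInter_cylinder (y : Subodometer Γ) : ⋂ n, cylinder y n = {y} := by
  ext x
  simp only [mem_iInter, mem_singleton_iff]
  exact ⟨fun h => Subtype.ext (funext h), fun h n => by rw [h]; rfl⟩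

theorem continuous_coord [TopologicalSpace G] (n : ℕ) :
    Continuous fun x : Subodometer Γ => x.1 n :=
  (continuous_apply n).comp continuous_subtype_val

theorem isClosed_cylinder [TopologicalSpace G] [DiscreteTopology G] (y : Subodometer Γ)
    (n : ℕ) : IsClosed (cylinder y n) :=
  (isClosed_discrete {y.1 n}).preimage (continuous_coord n)

theorem exists_conj_smul_mem_cylinder (y : Subodometer Γ) {n : ℕ} {δ : G} (hδ : δ ∈ Γ n) :
    ∃ g : G, (g * δ * g⁻¹) • y ∈ cylinder y n := by
  obtain ⟨g, hg⟩ := QuotientGroup.mk_surjective (y.1 n)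
  refine ⟨g, ?_⟩
  simp only [cylinder, mem_ofPred_eq, smul_val_apply, ← hg, MulAction.Quotient.smul_mk,
    QuotientGroup.eq]
  simpa using inv_mem hδ

theorem exists_preimage_cylinder_subset [TopologicalSpace G] [DiscreteTopology G]
    {X : Type*} [TopologicalSpace X] [CompactSpace X] {π : X → Subodometer Γ}
    (hπ : Continuous π) (y : Subodometer Γ) {U : Set X} (hU : IsOpen U)
    (hyU : π ⁻¹' {y} ⊆ U) : ∃ n, π ⁻¹' cylinder y n ⊆ U := by
  have hanti : Antitone fun n => π ⁻¹' cylinder y n := fun _ _ h =>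
    preimage_mono (cylinder_anti y h)
  refine exists_subset_nhds_of_compactSpace hanti.directed_ge
    (fun n => (isClosed_cylinder y n).preimage hπ) fun x hx => hU.mem_nhds (hyU ?_)
  rwa [← preimage_iInter, iInter_cylinder] at hx

end Subodometer

open Subodometer in
theorem statement11_general {G X : Type*} [Group G] [TopologicalSpace G]
    [DiscreteTopology G] [MetricSpace X] [CompactSpace X] [MulAction G X]
    (hmin : ∀ x : X, Dense (Set.range fun g : G => g • x))
    (Γ : ℕ → Subgroup G)
    (π : X → Subodometer Γ) (hπ : IsFactorMap G π)
    (h11 : ∃ y : Subodometer Γ, ∃! z : X, π z = y)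
    (χ : G →* Circle) :
    (∃ f : X → ℂ, Continuous f ∧ (∃ x, f x ≠ 0) ∧
        ∀ (g : G) (x : X), f (g • x) = (χ g : ℂ) * f x)
      ↔ ∃ n : ℕ, ∀ γ ∈ Γ n, χ γ = 1 := by
  obtain ⟨hπc, -, hπG⟩ := hπ
  constructor
  · rintro ⟨f, hf, ⟨x₀, hx₀⟩, heig⟩
    obtain ⟨_, z, rfl, hz⟩ := h11
    have hfz : f z ≠ 0 := fun h =>
      hx₀ (congrFun (eq_zero_of_apply_eq_zero_of_dense_orbit hf _ heig (hmin z) h) x₀)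
    let U := {x | 0 < (f x / f z).re}
    have hU : IsOpen U := isOpen_lt continuous_const (Complex.continuous_re.comp (hf.div_const _))
    obtain ⟨n, hn⟩ := exists_preimage_cylinder_subset hπc (π z) hU fun x hx => by
      rw [hz x hx]
      simp [U, hfz]
    refine ⟨n, χ.eq_one_of_forall_re_pos (Γ n) fun δ hδ => ?_⟩
    obtain ⟨g, hg⟩ := exists_conj_smul_mem_cylinder (π z) hδ
    have hgz : (g * δ * g⁻¹) • z ∈ U := hn (by rwa [mem_preimage, hπG])
    simpa [U, heig, hfz, mul_inv_cancel_comm] using hgz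
  · rintro ⟨n, hn⟩
    obtain ⟨-, x₀, -⟩ := h11
    have hker : Γ n ≤ χ.ker := hn
    refine ⟨fun x => χ.cosetLift hker ((π x).1 n), ?_, ⟨x₀, Circle.coe_ne_zero _⟩, fun g x => ?_⟩
    · exact (continuous_of_discreteTopology (f := fun q => (χ.cosetLift hker q : ℂ))).comp
        ((continuous_coord n).comp hπc)
    · simp only [hπG, smul_val_apply, MonoidHom.cosetLift_smul, Circle.coe_mul]

/-- Corollary on continuous eigenvalues: if the minimal system
`(X, G)` is an almost 1-1 extension of the subodometer `lim_{←n} G/Γₙ`, then a character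
`χ : G → S¹` admits a nonzero continuous eigenfunction on `X` iff `χ ≡ 1` on some
`Γₙ`. -/
theorem statement11 {G X : Type*} [Group G] [Group.FG G] [TopologicalSpace G]
    [DiscreteTopology G] [MetricSpace X] [CompactSpace X] [MulAction G X]
    (hc : ∀ g : G, Continuous fun x : X => g • x)
    (hmin : ∀ x : X, Dense (Set.range fun g : G => g • x))
    (Γ : ℕ → Subgroup G) (hdec : ∀ n, Γ (n + 1) ≤ Γ n) (hfin : ∀ n, (Γ n).FiniteIndex)
    (π : X → Subodometer Γ) (hπ : IsFactorMap G π)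
    (h11 : ∃ y : Subodometer Γ, ∃! z : X, π z = y)
    (χ : G →* Circle) :
    (∃ f : X → ℂ, Continuous f ∧ (∃ x, f x ≠ 0) ∧
        ∀ (g : G) (x : X), f (g • x) = (χ g : ℂ) * f x)
      ↔ ∃ n : ℕ, ∀ γ ∈ Γ n, χ γ = 1 :=
  statement11_general hmin Γ π hπ h11 χ
end

section
/- Let G be a discrete finitely generated residually finite group, let (Γ_i)_{i≥0} be a decreasing sequence of finite-index subgroups of G with ⋂_{i≥0} Γ_i = {e}, let ←G = lim_{←i}(G/Γ_i, π_i) be the associated subodometer, and let τ : G → ←G, τ(g) = (gΓ_i)_{i≥0}, be the canonical injection. Endow G with the topology pulled back from ←G along τ, and let K be a compact metric space. If f : G → K is a semicocycle on ←G, i.e., continuous for this topology, then f, regarded as an element of the space K^G with the product topology and the shift action (γ·f)(g) = f(gγ), is a regularly recurrent point of (K^G, G). -/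
/-! The product `g γ` tends to `g` in the topology pulled back from the subodometer as `γ` runs
into the subgroups `Γₙ`, because `g γ Γᵢ = g Γᵢ` once `γ ∈ Γᵢ`. Continuity of `f` for that
topology then makes the shifts `γ • f` tend to `f` coordinatewise, i.e. in `K^G`; as the `Γₙ`
decrease, every neighbourhood of `f` contains `γ • f` for all `γ` in a single `Γₙ`. -/

open Pointwise MeasureTheory

/-- The (left) shift action of `G` on `K^G`: `(γ • x) g = x (g γ)`. -/
instance shiftMulAction (G K : Type*) [Group G] : MulAction G (G → K) where
  smul γ x := fun g => x (g * γ)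
  one_smul x := funext fun g => congrArg x (mul_one g)
  mul_smul γ δ x := funext fun g => (congrArg x (mul_assoc g γ δ)).symm

/-- The set of return times of `x` to `A`: `T_A(x) = {g ∈ G : g • x ∈ A}`. -/
def ReturnTimes (G : Type*) {X : Type*} [SMul G X] (x : X) (A : Set X) : Set G :=
  {g : G | g • x ∈ A}

/-- A point `x` is regularly recurrent if every open neighborhood of `x` contains the
`Γ`-orbit of `x` for some finite-index subgroup `Γ` of `G`. -/
def RegularlyRecurrent (G : Type*) {X : Type*} [Group G] [TopologicalSpace X] [MulAction G X]
    (x : X) : Prop :=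
  ∀ V : Set X, IsOpen V → x ∈ V →
    ∃ Γ : Subgroup G, Γ.FiniteIndex ∧ (Γ : Set G) ⊆ ReturnTimes G x V

/-- A point `x` is strongly regularly recurrent if every open neighborhood `V` of `x`
contains a clopen neighborhood `W` of `x` whose return-time set `T_W(x)` is a
finite-index normal subgroup of `G`. -/
def StronglyRegularlyRecurrent (G : Type*) {X : Type*} [Group G] [TopologicalSpace X]
    [MulAction G X] (x : X) : Prop :=
  ∀ V : Set X, IsOpen V → x ∈ V →
    ∃ W : Set X, IsClopen W ∧ x ∈ W ∧ W ⊆ V ∧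
      ∃ Γ : Subgroup G, Γ.Normal ∧ Γ.FiniteIndex ∧ ReturnTimes G x W = (Γ : Set G)

open Filter Topology

theorem tendsto_mul_left_nhds_induced_odoTau {G : Type*} [Group G] [TopologicalSpace G]
    (Γ : ℕ → Subgroup G) (hdec : ∀ i, Γ (i + 1) ≤ Γ i) (g : G) :
    Tendsto (g * ·) (⨅ n, 𝓟 (Γ n : Set G))
      (@nhds G (TopologicalSpace.induced (odoTau Γ hdec) inferInstance) g) := by
  rw [nhds_induced, tendsto_comap_iff]
  refine tendsto_subtype_rng.2 (tendsto_pi_nhds.2 fun i => ?_)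
  refine tendsto_const_nhds.congr' (mem_iInf_of_mem i (mem_principal.2 fun γ hγ => ?_))
  show (QuotientGroup.mk g : G ⧸ Γ i) = QuotientGroup.mk (g * γ)
  rwa [QuotientGroup.eq, inv_mul_cancel_left]

theorem tendsto_shift_nhds {G K : Type*} [Group G] [t : TopologicalSpace G]
    [TopologicalSpace K] {L : Filter G} (hL : ∀ g, Tendsto (g * ·) L (𝓝 g)) {f : G → K}
    (hf : Continuous f) : Tendsto (fun γ : G => γ • f) L (𝓝 f) :=
  tendsto_pi_nhds.2 fun g => (hf.tendsto g).comp (hL g)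

theorem statement12_general {G : Type*} [Group G] [TopologicalSpace G]
    (Γ : ℕ → Subgroup G) (hdec : ∀ i, Γ (i + 1) ≤ Γ i) (hfin : ∀ i, (Γ i).FiniteIndex)
    {K : Type*} [MetricSpace K]
    (f : G → K)
    (hf : @Continuous G K
      (TopologicalSpace.induced (odoTau Γ hdec) inferInstance) inferInstance f) :
    RegularlyRecurrent G (f : G → K) := by
  intro V hV hfV
  have hshift := tendsto_shift_nhds (t := TopologicalSpace.induced (odoTau Γ hdec) inferInstance)
    (tendsto_mul_left_nhds_induced_odoTau Γ hdec) hf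
  have hbasis : (⨅ n, 𝓟 (Γ n : Set G)).HasBasis (fun _ => True) fun n => (Γ n : Set G) :=
    hasBasis_iInf_principal (antitone_nat_of_succ_le (f := fun n => (Γ n : Set G))
      fun i => SetLike.coe_subset_coe.2 (hdec i)).directed_ge
  obtain ⟨n, -, hn⟩ := hbasis.mem_iff.1 (hshift (hV.mem_nhds hfV))
  exact ⟨Γ n, hfin n, hn⟩

/-- Theorem `semicociclo1`: a semicocycle `f : G → K` on a subodometer
(with trivial intersection of the `Γᵢ`) is a regularly recurrent point of the shift
system `(K^G, G)`. -/
theorem statement12 {G : Type*} [Group G] [Group.FG G] [TopologicalSpace G]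
    [DiscreteTopology G]
    (Γ : ℕ → Subgroup G) (hdec : ∀ i, Γ (i + 1) ≤ Γ i) (hfin : ∀ i, (Γ i).FiniteIndex)
    (htriv : (⋂ i, ((Γ i : Subgroup G) : Set G)) = {1})
    {K : Type*} [MetricSpace K] [CompactSpace K]
    (f : G → K)
    (hf : @Continuous G K
      (TopologicalSpace.induced (odoTau Γ hdec) inferInstance) inferInstance f) :
    RegularlyRecurrent G (f : G → K) :=
  statement12_general Γ hdec hfin f hf
end

section
/- Let G be a discrete finitely generated group, let (X, G) be a minimal topological dynamical system, and let ←G = lim_{←n}(G/Γ_n, π_n) be a subodometer with ⋂_{n≥0} Γ_n = {e}, with e ∈ ←G the sequence of identity cosets. Then there exists an almost 1-1 factor map π : X → ←G with |π^{-1}({e})| = 1 if and only if (X, G) is conjugate to (Ω_G(f), G), where f : G → K is a semicocycle on ←G with values in some compact metric space K that is invariant under no rotation, Ω_G(f) being the closure of the shift-orbit of f in K^G. -/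
open Pointwise MeasureTheory

/-!
Forward direction: embed `X` in a compact metric space `K` and put `f g = g • x₀`, where `x₀` is
the only point over `e`. Uniqueness of the fibre over `e`, hence over every `τ g`, makes `f`
continuous along `τ`; the closure of the graph of `f` is `{(π x, x)}`, so distinct
points of `←G` have disjoint nonempty fibres; and `x ↦ (g ↦ g • x)` conjugates `X` onto `Ω_G(f)`.

Backward direction: the closure of `{(τ a, a • f)}` in `←G × Ω_G(f)` is the graph of the factor
map. It is single-valued because the fibres `F(g • h)` can be read off from a point `β` lying over
`h`: lifting `h` to the closure of `G` in `∏ᵢ Sym(G/Γᵢ)`, a compact group acting on `←G`, one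
finds `F(g • h) = {k | (g, k) ∈ closure of the graph of β}`, so invariance under no rotation pins
`h` down. The only point over `e` is `f` itself, by continuity of `f` along `τ`.
-/

open Filter Topology Set

section Topology

variable {α X Y Z : Type*} [TopologicalSpace X] [TopologicalSpace Y] [TopologicalSpace Z]

theorem continuous_of_isClosed_graph_of_compactSpace [CompactSpace Y] {f : X → Y}
    (hf : IsClosed {p : X × Y | f p.1 = p.2}) : Continuous f := by
  refine continuous_iff_isClosed.2 fun C hC => ?_
  have : f ⁻¹' C = Prod.fst '' ({p : X × Y | f p.1 = p.2} ∩ univ ×ˢ C) := by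
    ext x
    exact ⟨fun hx => ⟨(x, f x), ⟨rfl, trivial, hx⟩, rfl⟩,
      by rintro ⟨⟨x, y⟩, ⟨hxy, -, hy⟩, rfl⟩; change f x = y at hxy; rwa [mem_preimage, hxy]⟩
  rw [this]
  exact isClosedMap_fst_of_compactSpace _ (hf.inter (isClosed_univ.prod hC))

theorem exists_mem_closure_range_prodMk [CompactSpace Y] (p : α → Y) {q : α → Z} {z : Z}
    (hz : z ∈ closure (range q)) : ∃ y, (y, z) ∈ closure (range fun a => (p a, q a)) := by
  have hsub : closure (range q) ⊆ Prod.snd '' closure (range fun a => (p a, q a)) :=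
    closure_minimal (by rintro _ ⟨a, rfl⟩; exact ⟨(p a, q a), subset_closure ⟨a, rfl⟩, rfl⟩)
      (isClosedMap_snd_of_compactSpace _ isClosed_closure)
  obtain ⟨⟨y, _⟩, hy, rfl⟩ := hsub hz
  exact ⟨y, hy⟩

theorem range_eq_closure_image_of_dense [CompactSpace X] [T2Space Y] {f : X → Y}
    (hf : Continuous f) {s : Set X} (hs : Dense s) : range f = closure (f '' s) :=
  (hf.range_subset_closure_image_dense hs).antisymm
    (closure_minimal (image_subset_range f s) (isCompact_range hf).isClosed)

theorem continuous_induced_of_preimage_singleton [CompactSpace X] [T2Space Y] {π : X → Y}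
    (hπ : Continuous π) {τ : α → Y} {s : α → X} (hs : ∀ a x, π x = τ a ↔ x = s a) :
    Continuous[TopologicalSpace.induced τ ‹_›, ‹_›] s := by
  let _ : TopologicalSpace α := TopologicalSpace.induced τ ‹_›
  refine continuous_iff_isClosed.2 fun C hC => isClosed_induced_iff.2
    ⟨π '' C, (hC.isCompact.image hπ).isClosed, ?_⟩
  ext a
  constructor
  · rintro ⟨x, hx, hxa⟩
    rwa [(hs a x).1 hxa] at hx
  · intro ha
    exact ⟨s a, ha, (hs a (s a)).2 rfl⟩

theorem PiNat.nhds_hasBasis_cylinder {E : ℕ → Type*} [∀ n, TopologicalSpace (E n)]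
    [∀ n, DiscreteTopology (E n)] (x : ∀ n, E n) :
    (𝓝 x).HasBasis (fun _ => True) (PiNat.cylinder x) :=
  (PiNat.isTopologicalBasis_cylinders E).nhds_hasBasis.to_hasBasis
    (fun _ ⟨⟨_, n, hs⟩, hx⟩ => ⟨n, trivial, hs ▸ (PiNat.mem_cylinder_iff_eq.1 (hs ▸ hx)).le⟩)
    (fun n _ => ⟨_, ⟨⟨x, n, rfl⟩, PiNat.self_mem_cylinder x n⟩, subset_rfl⟩)

end Topology

instance Equiv.Perm.instTopologicalSpace (α : Type*) : TopologicalSpace (Equiv.Perm α) := ⊥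

instance Equiv.Perm.instDiscreteTopology (α : Type*) : DiscreteTopology (Equiv.Perm α) := ⟨rfl⟩

instance QuotientGroup.instDiscreteTopologyOfDiscrete {G : Type*} [Group G] [TopologicalSpace G]
    [DiscreteTopology G] (H : Subgroup G) : DiscreteTopology (G ⧸ H) :=
  QuotientGroup.discreteTopology (isOpen_discrete _)

theorem QuotientGroup.mk_eq_mk_one_iff {G : Type*} [Group G] {H : Subgroup G} {a : G} :
    (a : G ⧸ H) = ((1 : G) : G ⧸ H) ↔ a ∈ H := by
  rw [QuotientGroup.eq, mul_one, inv_mem_iff]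

namespace Subodometer

section Algebra

variable {G : Type*} [Group G] {Γ : ℕ → Subgroup G} (hdec : ∀ n, Γ (n + 1) ≤ Γ n)

@[simp]
theorem coe_odoTau_apply (a : G) (i : ℕ) : (odoTau Γ hdec a).1 i = a := rfl

theorem smul_odoTau (g a : G) : g • odoTau Γ hdec a = odoTau Γ hdec (g * a) := rfl

theorem odoTau_one : odoTau Γ hdec 1 = odoE Γ hdec := rfl

theorem smul_odoE (g : G) : g • odoE Γ hdec = odoTau Γ hdec g := by
  rw [← odoTau_one, smul_odoTau, mul_one]

theorem mk_eq_of_le (h : Subodometer Γ) {a : G} {i n : ℕ} (hin : i ≤ n)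
    (ha : (a : G ⧸ Γ n) = h.1 n) : (a : G ⧸ Γ i) = h.1 i := by
  induction n, hin using Nat.le_induction with
  | base => exact ha
  | succ n _ ih => exact ih (h.2 n a ha)

end Algebra

/- The closure of the image of `G` in `∏ᵢ Sym(G/Γᵢ)` is a compact group acting on `←G` through
`baseOrbit`; it stands in for `←G`, which is not a group unless the `Γᵢ` are normal. -/
section PermutationModel

variable {G : Type*} [Group G] (Γ : ℕ → Subgroup G) {Y : Type*} [TopologicalSpace Y]

abbrev CosetPerms : Type _ := ∀ i, Equiv.Perm (G ⧸ Γ i)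

def permRep : G →* CosetPerms Γ :=
  MonoidHom.pi fun i => MulAction.toPermHom G (G ⧸ Γ i)

def permHull : Subgroup (CosetPerms Γ) :=
  (permRep Γ).range.topologicalClosure

def baseOrbit (u : CosetPerms Γ) : ∀ i, G ⧸ Γ i :=
  fun i => u i (1 : G)

def permGraph (q : G → Y) : Set (CosetPerms Γ × Y) :=
  closure (range fun a => (permRep Γ a, q a))

variable {Γ}

@[simp]
theorem permRep_apply_mk (a b : G) (i : ℕ) : permRep Γ a i b = (a * b : G) := rfl

theorem baseOrbit_permRep (hdec : ∀ n, Γ (n + 1) ≤ Γ n) (a : G) :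
    baseOrbit Γ (permRep Γ a) = (odoTau Γ hdec a).1 := by
  ext i
  simp [baseOrbit]

theorem mem_permHull_iff {u : CosetPerms Γ} :
    u ∈ permHull Γ ↔ u ∈ closure (range (permRep Γ)) := by
  rw [permHull, ← MonoidHom.coe_range]
  rfl

theorem mem_permHull_iff_forall_exists {u : CosetPerms Γ} :
    u ∈ permHull Γ ↔ ∀ n, ∃ a, permRep Γ a ∈ PiNat.cylinder u n := by
  rw [mem_permHull_iff, mem_closure_iff_nhds_basis (PiNat.nhds_hasBasis_cylinder u)]
  simp

theorem fst_mem_permHull {q : G → Y} {p : CosetPerms Γ × Y} (hp : p ∈ permGraph Γ q) :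
    p.1 ∈ permHull Γ :=
  mem_permHull_iff.2 <| map_mem_closure continuous_fst hp (by rintro _ ⟨a, rfl⟩; exact ⟨a, rfl⟩)

theorem mem_permGraph_iff {K : Type*} [PseudoMetricSpace K] {q : G → K} {u : CosetPerms Γ}
    {k : K} : (u, k) ∈ permGraph Γ q ↔
      ∀ n, ∀ ε > 0, ∃ a, permRep Γ a ∈ PiNat.cylinder u n ∧ dist (q a) k < ε := by
  rw [permGraph, mem_closure_iff_nhds_basis
    ((PiNat.nhds_hasBasis_cylinder u).prod_nhds Metric.nhds_basis_ball)]
  simp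

variable {K : Type*} [TopologicalSpace K] {f : G → K} {u w : CosetPerms Γ} {β : G → K} {k : K}

theorem permRep_mul_mem_permGraph (hu : (u, β) ∈ permGraph Γ (· • f)) (g : G) :
    (permRep Γ g * u, β g) ∈ permGraph Γ f :=
  map_mem_closure (f := fun p : CosetPerms Γ × (G → K) => (permRep Γ g * p.1, p.2 g))
    ((continuous_const.mul continuous_fst).prodMk ((continuous_apply g).comp continuous_snd)) hu
    (by rintro _ ⟨a, rfl⟩; exact ⟨g * a, by simp only [map_mul]; rfl⟩)

theorem mul_mem_permGraph_of_mem_permGraph (hu : (u, β) ∈ permGraph Γ (· • f))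
    (hk : (w, k) ∈ permGraph Γ β) : (w * u, k) ∈ permGraph Γ f := by
  have := map_mem_closure (f := fun p : CosetPerms Γ × K => (p.1 * u, p.2))
    ((continuous_fst.mul continuous_const).prodMk continuous_snd) hk
    (t := permGraph Γ f) (by rintro _ ⟨g, rfl⟩; exact permRep_mul_mem_permGraph hu g)
  rwa [permGraph, closure_closure] at this

end PermutationModel

section Graph

variable {G : Type*} [Group G] [TopologicalSpace G] {Γ : ℕ → Subgroup G}
  (hdec : ∀ n, Γ (n + 1) ≤ Γ n) {Y K : Type*} [TopologicalSpace Y] [TopologicalSpace K]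

def graph (q : G → Y) : Set (Subodometer Γ × Y) :=
  closure (range fun a => (odoTau Γ hdec a, q a))

def IsSemicocycle (f : G → K) : Prop :=
  Continuous[TopologicalSpace.induced (odoTau Γ hdec) inferInstance, inferInstance] f

def fiber (f : G → K) (h : Subodometer Γ) : Set K :=
  {k | (h, k) ∈ closure {q : Subodometer Γ × K | ∃ a : G, q = (odoTau Γ hdec a, f a)}}

def IsInvariantUnderNoRotation (f : G → K) : Prop :=
  ∀ h₁ h₂ : Subodometer Γ, h₁ ≠ h₂ → ∃ g : G, fiber hdec f (g • h₁) ≠ fiber hdec f (g • h₂)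

variable {hdec}

theorem fiber_eq (f : G → K) (h : Subodometer Γ) :
    fiber hdec f h = {k | (h, k) ∈ graph hdec f} := by
  simp only [fiber, graph, range, eq_comm]

theorem continuous_baseOrbit : Continuous (baseOrbit Γ) :=
  continuous_pi fun i =>
    (continuous_of_discreteTopology (f := fun s : Equiv.Perm (G ⧸ Γ i) => s (1 : G))).comp
      (continuous_apply i)

theorem mem_graph_of_mem_permGraph {q : G → Y} {u : CosetPerms Γ} {h : Subodometer Γ}
    {y : Y} (hu : baseOrbit Γ u = h.1) (hy : (u, y) ∈ permGraph Γ q) : (h, y) ∈ graph hdec q := by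
  have hind : IsInducing (Prod.map Subtype.val id : Subodometer Γ × Y → (∀ i, G ⧸ Γ i) × Y) :=
    IsInducing.subtypeVal.prodMap IsInducing.id
  rw [graph, hind.closure_eq_preimage_closure_image, ← range_comp]
  change (h.1, y) ∈ closure (range _)
  rw [← hu]
  refine map_mem_closure (f := fun p : CosetPerms Γ × Y => (baseOrbit Γ p.1, p.2))
    ((continuous_baseOrbit.comp continuous_fst).prodMk continuous_snd) hy ?_
  rintro _ ⟨a, rfl⟩
  exact ⟨a, Prod.ext (baseOrbit_permRep hdec a).symm rfl⟩

end Graph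

variable {G : Type*} [Group G] [TopologicalSpace G] [DiscreteTopology G] {Γ : ℕ → Subgroup G}

section Topology

theorem tendsto_nhds_iff {α : Type*} {l : Filter α} {x : α → Subodometer Γ}
    {h : Subodometer Γ} : Tendsto x l (𝓝 h) ↔ ∀ i, ∀ᶠ a in l, (x a).1 i = h.1 i := by
  refine tendsto_subtype_rng.trans ?_
  simp only [tendsto_pi_nhds, nhds_discrete, tendsto_pure]

theorem isClosed_setOf_compat : IsClosed {x : ∀ i, G ⧸ Γ i | Compat Γ x} := by
  simp only [Compat, ofPred_forall]
  refine isClosed_iInter fun i => isClosed_iInter fun g => ?_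
  exact (isClosed_discrete {p : (G ⧸ Γ (i + 1)) × (G ⧸ Γ i) |
    (g : G ⧸ Γ (i + 1)) = p.1 → (g : G ⧸ Γ i) = p.2}).preimage
      ((continuous_apply (i + 1)).prodMk (continuous_apply (A := fun i => G ⧸ Γ i) i))

instance [∀ n, (Γ n).FiniteIndex] : CompactSpace (Subodometer Γ) :=
  isCompact_iff_compactSpace.1 isClosed_setOf_compat.isCompact

instance : T2Space (Subodometer Γ) :=
  inferInstanceAs (T2Space {x : ∀ i, G ⧸ Γ i // Compat Γ x})

instance : ContinuousConstSMul G (Subodometer Γ) where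
  continuous_const_smul g :=
    continuous_induced_rng.2 (continuous_pi fun i => (continuous_const_smul g).comp
      ((continuous_apply i).comp continuous_subtype_val))

theorem denseRange_odoTau (hdec : ∀ n, Γ (n + 1) ≤ Γ n) : DenseRange (odoTau Γ hdec) := by
  intro h
  choose a ha using fun n => QuotientGroup.mk_surjective (h.1 n)
  refine mem_closure_of_tendsto
    ((tendsto_nhds_iff (l := atTop) (x := fun n => odoTau Γ hdec (a n))).2 fun i => ?_)
    (Eventually.of_forall fun n => mem_range_self (a n))
  filter_upwards [eventually_ge_atTop i] with n hn
  exact mk_eq_of_le h hn (ha n)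

end Topology

variable {hdec : ∀ n, Γ (n + 1) ≤ Γ n}

section Semicocycle

variable {K : Type*} [TopologicalSpace K] {f : G → K}

theorem smul_mem_graph_smul {h : Subodometer Γ} {β : G → K}
    (hβ : (h, β) ∈ graph hdec (· • f)) (g : G) : (g • h, g • β) ∈ graph hdec (· • f) := by
  refine map_mem_closure (f := fun p : Subodometer Γ × (G → K) => (g • p.1, g • p.2))
    ((continuous_const_smul g).prodMap (continuous_pi fun a => continuous_apply (a * g))) hβ ?_
  rintro _ ⟨a, rfl⟩
  exact ⟨g * a, by simp only [smul_odoTau, mul_smul]⟩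

theorem IsSemicocycle.tendsto_mul_left (hf : IsSemicocycle hdec f) (a : G) :
    Tendsto (fun c => f (a * c)) (⨅ n, 𝓟 (Γ n : Set G)) (𝓝 (f a)) := by
  have h := @Continuous.tendsto G K (.induced (odoTau Γ hdec) inferInstance) _ f hf a
  rw [@nhds_induced] at h
  refine h.comp (tendsto_comap_iff.2 (tendsto_nhds_iff.2 fun i => ?_))
  filter_upwards [mem_iInf_of_mem i (mem_principal_self _)] with c hc
  simpa [QuotientGroup.eq] using hc

theorem IsSemicocycle.tendsto_smul (hf : IsSemicocycle hdec f) :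
    Tendsto (· • f) (⨅ n, 𝓟 (Γ n : Set G)) (𝓝 f) :=
  tendsto_pi_nhds.2 hf.tendsto_mul_left

theorem IsSemicocycle.eq_of_mem_graph_smul [T2Space K] (hf : IsSemicocycle hdec f)
    {β : G → K} (hβ : (odoE Γ hdec, β) ∈ graph hdec (· • f)) : β = f := by
  set l := comap (fun a => (odoTau Γ hdec a, a • f)) (𝓝 (odoE Γ hdec, β))
  have : l.NeBot := comap_neBot_iff_frequently.2 (mem_closure_iff_frequently.1 hβ)
  have hl : Tendsto (fun a => (odoTau Γ hdec a, a • f)) l (𝓝 (odoE Γ hdec, β)) := tendsto_comap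
  have hdeep : l ≤ ⨅ n, 𝓟 (Γ n : Set G) := le_iInf fun n => le_principal_iff.2 <| by
    filter_upwards [tendsto_nhds_iff.1 hl.fst_nhds n] with a ha
    exact QuotientGroup.mk_eq_mk_one_iff.1 ha
  exact tendsto_nhds_unique hl.snd_nhds (hf.tendsto_smul.mono_left hdeep)

end Semicocycle

theorem IsSemicocycle.exists_forall_dist_lt {K : Type*} [PseudoMetricSpace K] {f : G → K}
    (hf : IsSemicocycle hdec f) (a : G) {ε : ℝ} (hε : 0 < ε) :
    ∃ m, ∀ c ∈ Γ m, dist (f (a * c)) (f a) < ε := by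
  have hdir : Directed (· ≥ ·) fun n => (Γ n : Set G) :=
    Antitone.directed_ge fun _ _ hmn => antitone_nat_of_succ_le hdec hmn
  simpa using ((hasBasis_iInf_principal hdir).tendsto_iff Metric.nhds_basis_ball).1
    (hf.tendsto_mul_left a) ε hε

theorem exists_lift_of_mem_graph [∀ n, (Γ n).FiniteIndex] {Y : Type*} [TopologicalSpace Y]
    {q : G → Y} {h : Subodometer Γ} {y : Y} (hy : (h, y) ∈ graph hdec q) :
    ∃ u ∈ permHull Γ, baseOrbit Γ u = h.1 ∧ (u, y) ∈ permGraph Γ q := by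
  obtain ⟨u, hu⟩ := exists_mem_closure_range_prodMk (permRep Γ) hy
  have huy : (u, y) ∈ permGraph Γ q :=
    map_mem_closure (f := fun p : CosetPerms Γ × (Subodometer Γ × Y) => (p.1, p.2.2))
      (continuous_fst.prodMk continuous_snd.snd) hu (by rintro _ ⟨a, rfl⟩; exact ⟨a, rfl⟩)
  have hbase : IsClosed {p : CosetPerms Γ × (Subodometer Γ × Y) | baseOrbit Γ p.1 = p.2.1.1} :=
    isClosed_eq (continuous_baseOrbit.comp continuous_fst)
      (continuous_subtype_val.comp (continuous_fst.comp continuous_snd))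
  refine ⟨u, fst_mem_permHull huy, closure_minimal ?_ hbase hu, huy⟩
  rintro _ ⟨a, rfl⟩
  exact baseOrbit_permRep hdec a

section Fibers

variable {K : Type*} [MetricSpace K] {f : G → K} {u w : CosetPerms Γ} {β : G → K} {k : K}

theorem IsSemicocycle.mem_permGraph_smul_of_baseOrbit_eq (hf : IsSemicocycle hdec f)
    (hw : w ∈ permHull Γ) (hw1 : baseOrbit Γ w = baseOrbit Γ 1) :
    (w, f) ∈ permGraph Γ (· • f) := by
  set l := comap (permRep Γ) (𝓝 w)
  have : l.NeBot :=
    comap_neBot_iff_frequently.2 (mem_closure_iff_frequently.1 (mem_permHull_iff.1 hw))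
  have hl : Tendsto (permRep Γ) l (𝓝 w) := tendsto_comap
  have hdeep : l ≤ ⨅ n, 𝓟 (Γ n : Set G) := le_iInf fun n => le_principal_iff.2 <| by
    have hn : ∀ᶠ a in l, permRep Γ a n = w n := by
      simpa only [nhds_discrete, tendsto_pure] using (tendsto_pi_nhds.1 hl) n
    filter_upwards [hn] with a ha
    rw [SetLike.mem_coe, ← QuotientGroup.mk_eq_mk_one_iff]
    simpa [baseOrbit, ← ha] using congrFun hw1 n
  exact mem_closure_of_tendsto (hl.prodMk_nhds (hf.tendsto_smul.mono_left hdeep))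
    (Eventually.of_forall fun a => mem_range_self a)

theorem IsSemicocycle.mem_permGraph_of_mul_mem_permGraph (hf : IsSemicocycle hdec f)
    (hu : (u, β) ∈ permGraph Γ (· • f)) (hk : (w * u, k) ∈ permGraph Γ f) :
    (w, k) ∈ permGraph Γ β := by
  rw [mem_permGraph_iff] at hk ⊢
  intro n ε hε
  obtain ⟨a, ha, hak⟩ := hk n (ε / 3) (by positivity)
  obtain ⟨m, hm⟩ := hf.exists_forall_dist_lt a (by positivity : 0 < ε / 3)
  obtain ⟨c, hc⟩ := mem_permHull_iff_forall_exists.1 (fst_mem_permHull hu) (max n (m + 1))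
  obtain ⟨a', ha', ha'g⟩ := mem_permGraph_iff.1
    (permRep_mul_mem_permGraph hu (a * c⁻¹)) (m + 1) (ε / 3) (by positivity)
  refine ⟨a * c⁻¹, fun i hi => ?_, ?_⟩
  · rw [map_mul, map_inv, Pi.mul_apply, Pi.inv_apply, ha i hi,
      hc i (hi.trans_le (le_max_left _ _)), Pi.mul_apply, mul_inv_cancel_right]
  · -- `a'` and `a` agree modulo `Γₘ`, since `u` and `c` move the base point alike
    have hmk : (a' : G ⧸ Γ m) = a := by
      have h1 := congrArg (· (1 : G)) (ha' m (Nat.lt_succ_self m))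
      have h2 := congrArg (· (1 : G)) (hc m (Nat.lt_succ_self m |>.trans_le (le_max_right _ _)))
      simp only [permRep_apply_mk, mul_one, Pi.mul_apply, Equiv.Perm.coe_mul,
        Function.comp_apply] at h1 h2
      rw [h1, ← h2, permRep_apply_mk, inv_mul_cancel_right]
    have h3 := hm (a⁻¹ * a') (QuotientGroup.eq.1 hmk.symm)
    rw [mul_inv_cancel_left] at h3
    calc dist (β (a * c⁻¹)) k ≤ dist (β (a * c⁻¹)) (f a') + dist (f a') (f a) + dist (f a) k :=
          dist_triangle4 _ _ _ _
      _ < ε / 3 + ε / 3 + ε / 3 := by rw [dist_comm] at ha'g; gcongr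
      _ = ε := by ring

theorem IsSemicocycle.mul_mem_permGraph_iff (hf : IsSemicocycle hdec f)
    (hu : (u, β) ∈ permGraph Γ (· • f)) :
    (w * u, k) ∈ permGraph Γ f ↔ (w, k) ∈ permGraph Γ β :=
  ⟨hf.mem_permGraph_of_mul_mem_permGraph hu, mul_mem_permGraph_of_mem_permGraph hu⟩

variable [∀ n, (Γ n).FiniteIndex]

theorem IsSemicocycle.fiber_eq_of_baseOrbit_eq (hf : IsSemicocycle hdec f)
    (hu : u ∈ permHull Γ) {h : Subodometer Γ} (huh : baseOrbit Γ u = h.1) :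
    fiber hdec f h = {k | (u, k) ∈ permGraph Γ f} := by
  ext k
  rw [fiber_eq, mem_ofPred_eq, mem_ofPred_eq]
  refine ⟨fun hk => ?_, mem_graph_of_mem_permGraph huh⟩
  obtain ⟨v, hv, hvh, hvk⟩ := exists_lift_of_mem_graph hk
  have hfix : baseOrbit Γ (v⁻¹ * u) = baseOrbit Γ 1 := by
    ext i
    have hi := congrFun (huh.trans hvh.symm) i
    simp only [baseOrbit] at hi ⊢
    simp [hi]
  have hvu := hf.mem_permGraph_smul_of_baseOrbit_eq (mul_mem (inv_mem hv) hu) hfix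
  rw [← mul_inv_cancel_left v u]
  exact (hf.mul_mem_permGraph_iff hvu).2 hvk

theorem IsSemicocycle.fiber_smul_eq (hf : IsSemicocycle hdec f) {h : Subodometer Γ}
    (hβ : (h, β) ∈ graph hdec (· • f)) (g : G) :
    fiber hdec f (g • h) = {k | (permRep Γ g, k) ∈ permGraph Γ β} := by
  obtain ⟨u, hu, huh, huβ⟩ := exists_lift_of_mem_graph hβ
  have hgu : permRep Γ g * u ∈ permHull Γ :=
    mul_mem ((permRep Γ).range.le_topologicalClosure ⟨g, rfl⟩) hu
  rw [hf.fiber_eq_of_baseOrbit_eq hgu (funext fun i => congrArg (g • ·) (congrFun huh i))]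
  ext k
  exact hf.mul_mem_permGraph_iff huβ

theorem IsSemicocycle.eq_of_mem_graph_smul_of_mem_graph_smul (hf : IsSemicocycle hdec f)
    (hrot : IsInvariantUnderNoRotation hdec f) {h₁ h₂ : Subodometer Γ}
    (h₁β : (h₁, β) ∈ graph hdec (· • f)) (h₂β : (h₂, β) ∈ graph hdec (· • f)) : h₁ = h₂ := by
  by_contra hne
  obtain ⟨g, hg⟩ := hrot h₁ h₂ hne
  exact hg (by rw [hf.fiber_smul_eq h₁β, hf.fiber_smul_eq h₂β])

theorem IsSemicocycle.exists_isFactorMap {X : Type*} [TopologicalSpace X] [CompactSpace X]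
    [MulAction G X] (hf : IsSemicocycle hdec f) (hrot : IsInvariantUnderNoRotation hdec f)
    {φ : X → (G → K)} (hφc : Continuous φ) (hφi : Function.Injective φ)
    (hφe : ∀ (g : G) (x : X), φ (g • x) = g • φ x)
    (hφr : range φ = closure (range fun g : G => g • f)) :
    ∃ π : X → Subodometer Γ, IsFactorMap G π ∧ ∃! x : X, π x = odoE Γ hdec := by
  have hpos (x : X) : ∃ h, (h, φ x) ∈ graph hdec (· • f) :=
    exists_mem_closure_range_prodMk (odoTau Γ hdec) (hφr ▸ mem_range_self x)
  choose π hπ using hpos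
  have hπ_iff (x : X) (h : Subodometer Γ) : π x = h ↔ (h, φ x) ∈ graph hdec (· • f) :=
    ⟨fun e => e ▸ hπ x, hf.eq_of_mem_graph_smul_of_mem_graph_smul hrot (hπ x)⟩
  have hequiv (g : G) (x : X) : π (g • x) = g • π x :=
    (hπ_iff _ _).2 (hφe g x ▸ smul_mem_graph_smul (hπ x) g)
  have hcont : Continuous π := continuous_of_isClosed_graph_of_compactSpace <| by
    simp_rw [hπ_iff]
    exact isClosed_closure.preimage (continuous_snd.prodMk (hφc.comp continuous_fst))
  obtain ⟨x₀, hx₀⟩ : f ∈ range φ := hφr ▸ subset_closure ⟨1, one_smul G f⟩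
  have hx₀e : π x₀ = odoE Γ hdec := (hπ_iff _ _).2 <| by
    rw [hx₀]
    exact subset_closure ⟨1, Prod.ext (odoTau_one hdec) (one_smul G f)⟩
  have hsurj : Function.Surjective π := by
    have hτ : range (odoTau Γ hdec) ⊆ range π := by
      rintro _ ⟨a, rfl⟩
      exact ⟨a • x₀, by rw [hequiv, hx₀e, smul_odoE]⟩
    rw [← range_eq_univ, ← (isCompact_range hcont).isClosed.closure_eq,
      ((denseRange_odoTau hdec).mono hτ).closure_eq]
  refine ⟨π, ⟨hcont, hsurj, hequiv⟩, x₀, hx₀e, fun y hy => hφi ?_⟩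
  rw [hx₀]
  exact hf.eq_of_mem_graph_smul ((hπ_iff y _).1 hy)

end Fibers

end Subodometer

theorem exists_compactSpace_metricSpace_embedding (X : Type*) [MetricSpace X] [CompactSpace X] :
    ∃ (K : Type) (_ : MetricSpace K), CompactSpace K ∧
      ∃ ψ : X → K, Continuous ψ ∧ Function.Injective ψ :=
  have hκ := kuratowskiEmbedding.isometry X
  ⟨range (kuratowskiEmbedding X), inferInstance,
    isCompact_iff_compactSpace.1 (isCompact_range hκ.continuous), rangeFactorization _,
    hκ.continuous.codRestrict _, fun _ _ h => hκ.injective (congrArg Subtype.val h)⟩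

section FactorMap

open Subodometer

variable {G : Type*} [Group G] {X : Type*} [TopologicalSpace X] [MulAction G X] {x₀ : X}
  {K : Type*} [MetricSpace K] {ψ : X → K}

theorem range_coding_eq_closure_range_smul [CompactSpace X] (hc : ∀ g : G, Continuous fun x : X => g • x)
    (hmin : Dense (range fun g : G => g • x₀)) (hψ : Continuous ψ) :
    range (fun x (g : G) => ψ (g • x)) = closure (range fun a : G => a • fun b => ψ (b • x₀)) := by
  rw [range_eq_closure_image_of_dense (f := fun x (g : G) => ψ (g • x))
      (continuous_pi fun g => hψ.comp (hc g)) hmin, ← range_comp]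
  congr
  ext a b
  exact congrArg ψ (mul_smul b a x₀).symm

variable [TopologicalSpace G] {Γ : ℕ → Subgroup G} {hdec : ∀ n, Γ (n + 1) ≤ Γ n}
  {π : X → Subodometer Γ}

theorem IsFactorMap.apply_eq_odoTau_iff (hπ : IsFactorMap G π) (hx₀ : π x₀ = odoE Γ hdec)
    (huniq : ∀ x, π x = odoE Γ hdec → x = x₀) (a : G) (x : X) :
    π x = odoTau Γ hdec a ↔ x = a • x₀ := by
  constructor
  · intro hx
    have : π (a⁻¹ • x) = odoE Γ hdec := by rw [hπ.2.2, hx, ← smul_odoE, inv_smul_smul]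
    rw [← huniq _ this, smul_inv_smul]
  · rintro rfl
    rw [hπ.2.2, hx₀, smul_odoE]

variable [DiscreteTopology G] [CompactSpace X]

theorem IsFactorMap.isSemicocycle (hπ : IsFactorMap G π) (hx₀ : π x₀ = odoE Γ hdec)
    (huniq : ∀ x, π x = odoE Γ hdec → x = x₀) (hψ : Continuous ψ) :
    IsSemicocycle hdec fun a => ψ (a • x₀) :=
  @Continuous.comp G X K (.induced (odoTau Γ hdec) inferInstance) _ _ _ _ hψ
    (continuous_induced_of_preimage_singleton hπ.1 (hπ.apply_eq_odoTau_iff hx₀ huniq))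

theorem IsFactorMap.graph_eq_range (hπ : IsFactorMap G π) (hx₀ : π x₀ = odoE Γ hdec)
    (hmin : Dense (range fun g : G => g • x₀)) (hψ : Continuous ψ) :
    graph hdec (fun a => ψ (a • x₀)) = range fun x => (π x, ψ x) := by
  rw [graph, range_eq_closure_image_of_dense (hπ.1.prodMk hψ) hmin, ← range_comp]
  congr
  ext a : 1
  simp only [Function.comp_apply, hπ.2.2, hx₀, smul_odoE]

theorem IsFactorMap.isInvariantUnderNoRotation (hπ : IsFactorMap G π)
    (hx₀ : π x₀ = odoE Γ hdec) (hmin : Dense (range fun g : G => g • x₀)) (hψ : Continuous ψ)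
    (hψi : Function.Injective ψ) : IsInvariantUnderNoRotation hdec fun a => ψ (a • x₀) := by
  have hfiber (h : Subodometer Γ) : fiber hdec (fun a => ψ (a • x₀)) h = ψ '' (π ⁻¹' {h}) := by
    ext k
    simp [fiber_eq, hπ.graph_eq_range hx₀ hmin hψ, and_comm]
  intro h₁ h₂ hne
  refine ⟨1, fun heq => hne ?_⟩
  rw [one_smul, one_smul, hfiber, hfiber] at heq
  obtain ⟨x₁, rfl⟩ := hπ.2.1 h₁
  have hx₁ : ψ x₁ ∈ ψ '' (π ⁻¹' {π x₁}) := mem_image_of_mem ψ rfl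
  rw [heq] at hx₁
  obtain ⟨x₂, hx₂, hψx⟩ := hx₁
  rw [← hψi hψx, hx₂]

end FactorMap

open Subodometer in
theorem statement13_general {G X : Type*} [Group G] [TopologicalSpace G]
    [DiscreteTopology G] [MetricSpace X] [CompactSpace X] [MulAction G X]
    (hc : ∀ g : G, Continuous fun x : X => g • x)
    (hmin : ∀ x : X, Dense (Set.range fun g : G => g • x))
    (Γ : ℕ → Subgroup G) (hdec : ∀ n, Γ (n + 1) ≤ Γ n) (hfin : ∀ n, (Γ n).FiniteIndex) :
    (∃ π : X → Subodometer Γ, IsFactorMap G π ∧ ∃! x : X, π x = odoE Γ hdec)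
      ↔ ∃ (K : Type) (_ : MetricSpace K), CompactSpace K ∧
          ∃ f : G → K,
            (@Continuous G K
              (TopologicalSpace.induced (odoTau Γ hdec) inferInstance) inferInstance f) ∧
            (∀ h₁ h₂ : Subodometer Γ, h₁ ≠ h₂ → ∃ g : G,
              {k : K | (g • h₁, k) ∈
                closure {q : Subodometer Γ × K | ∃ a : G, q = (odoTau Γ hdec a, f a)}} ≠
              {k : K | (g • h₂, k) ∈
                closure {q : Subodometer Γ × K | ∃ a : G, q = (odoTau Γ hdec a, f a)}}) ∧
            ∃ φ : X → (G → K), Continuous φ ∧ Function.Injective φ ∧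
              (∀ (g : G) (x : X), φ (g • x) = g • φ x) ∧
              Set.range φ = closure (Set.range fun g : G => g • f) := by
  constructor
  · rintro ⟨π, hπ, x₀, hx₀, huniq⟩
    obtain ⟨K, _, _, ψ, hψ, hψi⟩ := exists_compactSpace_metricSpace_embedding X
    refine ⟨K, _, ‹_›, fun a => ψ (a • x₀), hπ.isSemicocycle hx₀ huniq hψ,
      hπ.isInvariantUnderNoRotation hx₀ (hmin x₀) hψ hψi, fun x g => ψ (g • x),
      continuous_pi fun g => hψ.comp (hc g), fun x y hxy => ?_, fun g x => ?_,
      range_coding_eq_closure_range_smul hc (hmin x₀) hψ⟩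
    · simpa using hψi (congrFun hxy 1)
    · ext a
      exact congrArg ψ (mul_smul a g x).symm
  · rintro ⟨K, _, _, f, hf, hrot, φ, hφc, hφi, hφe, hφr⟩
    exact IsSemicocycle.exists_isFactorMap hf hrot hφc hφi hφe hφr

/-- Theorem `semicociclo2`: a minimal system `(X, G)` admits an almost
1-1 factor map onto the subodometer `←G` with `|π⁻¹(e)| = 1` iff it is conjugate to the
orbit-closure system `(Ω_G(f), G)` of a semicocycle `f` on `←G` invariant under no
rotation. -/
theorem statement13 {G X : Type*} [Group G] [Group.FG G] [TopologicalSpace G]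
    [DiscreteTopology G] [MetricSpace X] [CompactSpace X] [MulAction G X]
    (hc : ∀ g : G, Continuous fun x : X => g • x)
    (hmin : ∀ x : X, Dense (Set.range fun g : G => g • x))
    (Γ : ℕ → Subgroup G) (hdec : ∀ n, Γ (n + 1) ≤ Γ n) (hfin : ∀ n, (Γ n).FiniteIndex)
    (htriv : (⋂ n, ((Γ n : Subgroup G) : Set G)) = {1}) :
    (∃ π : X → Subodometer Γ, IsFactorMap G π ∧ ∃! x : X, π x = odoE Γ hdec)
      ↔ ∃ (K : Type) (_ : MetricSpace K), CompactSpace K ∧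
          ∃ f : G → K,
            (@Continuous G K
              (TopologicalSpace.induced (odoTau Γ hdec) inferInstance) inferInstance f) ∧
            (∀ h₁ h₂ : Subodometer Γ, h₁ ≠ h₂ → ∃ g : G,
              {k : K | (g • h₁, k) ∈
                closure {q : Subodometer Γ × K | ∃ a : G, q = (odoTau Γ hdec a, f a)}} ≠
              {k : K | (g • h₂, k) ∈
                closure {q : Subodometer Γ × K | ∃ a : G, q = (odoTau Γ hdec a, f a)}}) ∧
            ∃ φ : X → (G → K), Continuous φ ∧ Function.Injective φ ∧
              (∀ (g : G) (x : X), φ (g • x) = g • φ x) ∧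
              Set.range φ = closure (Set.range fun g : G => g • f) :=
  statement13_general hc hmin Γ hdec hfin
end

section
/- Let G be a discrete finitely generated group, Σ a finite alphabet, and x ∈ Σ^G. The following are equivalent: (1) x is a Toeplitz array; (2) there exists a decreasing sequence (Γ_n)_{n≥0} of finite-index subgroups of G such that G = ⋃_{n≥0} Per(x, Γ_n); (3) x is a regularly recurrent point of the shift system (Σ^G, G). -/
open Pointwise MeasureTheory

/-- `Per(x, Γ, σ) = {g ∈ G : x (g γ) = σ for all γ ∈ Γ}`. -/
def PerSet {G A : Type*} [Group G] (x : G → A) (Γ : Subgroup G) (σ : A) : Set G :=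
  {g : G | ∀ γ ∈ Γ, x (g * γ) = σ}

/-- `Per(x, Γ) = ⋃_σ Per(x, Γ, σ)`. -/
def Per {G A : Type*} [Group G] (x : G → A) (Γ : Subgroup G) : Set G :=
  ⋃ σ : A, PerSet x Γ σ

/-- `x` is a `G`-Toeplitz array if every `g ∈ G` belongs to `Per(x, Γ)` for some
finite-index subgroup `Γ`. -/
def IsToeplitz {G A : Type*} [Group G] (x : G → A) : Prop :=
  ∀ g : G, ∃ Γ : Subgroup G, Γ.FiniteIndex ∧ g ∈ Per x Γ

/-- `Γ` is an essential group of periods of `x`: every `g ∈ G` with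
`Per(x, Γ, σ) ⊆ Per(g • x, Γ, σ)` for all `σ` belongs to `Γ`. -/
def IsEssentialPeriodGroup {G A : Type*} [Group G] (x : G → A) (Γ : Subgroup G) : Prop :=
  ∀ g : G, (∀ σ : A, PerSet x Γ σ ⊆ PerSet (g • x) Γ σ) → g ∈ Γ

/-!
`g ∈ Per(x, Γ)` says exactly that the `Γ`-orbit of `x` stays in the cylinder `{y | y g = x g}`.
In `Σ^G` with `Σ` discrete these cylinders, intersected over finitely many `g`, form a
neighbourhood basis of `x`, and finitely many finite-index subgroups intersect in a
finite-index subgroup; so being Toeplitz is regular recurrence read off coordinatewise.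
A finitely generated group is countable, and intersecting the subgroups attached to the first
`n` elements of an enumeration of `G` gives the decreasing sequence.
-/

theorem Group.countable_of_fg (G : Type*) [Group G] [Group.FG G] : Countable G := by
  obtain ⟨α, _, φ, hφ⟩ := Group.fg_iff_exists_freeGroup_hom_surjective_finite.mp ‹_›
  exact hφ.countable

section Toeplitz

variable {G A : Type*} [Group G]

theorem shift_smul_apply (γ : G) (x : G → A) (g : G) : (γ • x) g = x (g * γ) := rfl

theorem mem_per_iff {x : G → A} {Γ : Subgroup G} {g : G} :
    g ∈ Per x Γ ↔ ∀ γ ∈ Γ, (γ • x) g = x g := by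
  simp only [Per, PerSet, Set.mem_iUnion, Set.mem_ofPred_eq, shift_smul_apply]
  constructor
  · rintro ⟨σ, hσ⟩ γ hγ
    have hg : x g = σ := by simpa using hσ 1 Γ.one_mem
    rw [hσ γ hγ, hg]
  · exact fun h => ⟨x g, h⟩

theorem per_anti (x : G → A) {Δ Γ : Subgroup G} (h : Δ ≤ Γ) : Per x Γ ⊆ Per x Δ :=
  fun _ hg => mem_per_iff.mpr fun γ hγ => mem_per_iff.mp hg γ (h hγ)

theorem IsToeplitz.regularlyRecurrent [TopologicalSpace A] {x : G → A} (hx : IsToeplitz x) :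
    RegularlyRecurrent G x := by
  intro V hV hxV
  obtain ⟨I, u, hu, hIu⟩ := isOpen_pi_iff.mp hV x hxV
  choose Γ hΓ hper using hx
  refine ⟨⨅ g ∈ I, Γ g, Subgroup.finiteIndex_iInf' _ fun g _ => hΓ g,
    fun γ hγ => hIu fun g hg => ?_⟩
  have hγg : γ ∈ Γ g := Subgroup.mem_iInf.mp (Subgroup.mem_iInf.mp hγ g) hg
  rw [mem_per_iff.mp (hper g) γ hγg]
  exact (hu g hg).2

theorem RegularlyRecurrent.isToeplitz [TopologicalSpace A] [DiscreteTopology A] {x : G → A}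
    (hx : RegularlyRecurrent G x) : IsToeplitz x := by
  intro g
  have hcyl : IsOpen ((fun y : G → A => y g) ⁻¹' {x g}) :=
    (isOpen_discrete _).preimage (continuous_apply g)
  obtain ⟨Γ, hΓ, hret⟩ := hx _ hcyl rfl
  exact ⟨Γ, hΓ, mem_per_iff.mpr fun γ hγ => hret hγ⟩

theorem IsToeplitz.exists_antitone_finiteIndex_iUnion_per_eq_univ [Countable G] {x : G → A}
    (hx : IsToeplitz x) :
    ∃ Γ : ℕ → Subgroup G, (∀ n, Γ (n + 1) ≤ Γ n) ∧ (∀ n, (Γ n).FiniteIndex) ∧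
      (⋃ n, Per x (Γ n)) = Set.univ := by
  obtain ⟨e, he⟩ := exists_surjective_nat G
  choose Γ hΓ hper using hx
  refine ⟨fun n => ⨅ k ∈ Finset.range (n + 1), Γ (e k),
    fun n => biInf_mono fun k hk => Finset.range_subset_range.mpr (n + 1).le_succ hk,
    fun n => Subgroup.finiteIndex_iInf' _ fun k _ => hΓ (e k),
    Set.eq_univ_of_forall fun g => ?_⟩
  obtain ⟨n, rfl⟩ := he g
  exact Set.mem_iUnion.mpr
    ⟨n, per_anti x (biInf_le _ (Finset.self_mem_range_succ n)) (hper (e n))⟩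

theorem isToeplitz_of_iUnion_per_eq_univ {ι : Type*} {x : G → A} {Γ : ι → Subgroup G}
    (hΓ : ∀ i, (Γ i).FiniteIndex) (hcover : (⋃ i, Per x (Γ i)) = Set.univ) :
    IsToeplitz x := by
  intro g
  obtain ⟨i, hi⟩ := Set.mem_iUnion.mp (hcover ▸ Set.mem_univ g)
  exact ⟨Γ i, hΓ i, hi⟩

end Toeplitz

theorem statement14_general {G A : Type*} [Group G] [Group.FG G]
    [TopologicalSpace A] [DiscreteTopology A] (x : G → A) :
    (IsToeplitz x ↔
      ∃ Γ : ℕ → Subgroup G, (∀ n, Γ (n + 1) ≤ Γ n) ∧ (∀ n, (Γ n).FiniteIndex) ∧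
        (⋃ n, Per x (Γ n)) = Set.univ) ∧
    (IsToeplitz x ↔ RegularlyRecurrent G x) := by
  have := Group.countable_of_fg G
  exact ⟨⟨IsToeplitz.exists_antitone_finiteIndex_iUnion_per_eq_univ,
      fun ⟨_, _, hΓ, hcover⟩ => isToeplitz_of_iUnion_per_eq_univ hΓ hcover⟩,
    ⟨IsToeplitz.regularlyRecurrent, RegularlyRecurrent.isToeplitz⟩⟩

/-- Proposition `toeplitz`: for `x ∈ Σ^G` the following are
equivalent: `x` is a Toeplitz array; there is a decreasing sequence of finite-index
subgroups `(Γₙ)` with `G = ⋃ₙ Per(x, Γₙ)`; `x` is a regularly recurrent point of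
`(Σ^G, G)`. -/
theorem statement14 {G A : Type*} [Group G] [Group.FG G] [Finite A]
    [TopologicalSpace A] [DiscreteTopology A] (x : G → A) :
    (IsToeplitz x ↔
      ∃ Γ : ℕ → Subgroup G, (∀ n, Γ (n + 1) ≤ Γ n) ∧ (∀ n, (Γ n).FiniteIndex) ∧
        (⋃ n, Per x (Γ n)) = Set.univ) ∧
    (IsToeplitz x ↔ RegularlyRecurrent G x) :=
  statement14_general x
end

section
/- Let G be a discrete finitely generated group, Σ a finite alphabet, and x ∈ Σ^G. If Γ is a finite-index subgroup of G which is a group of periods of x (i.e., Per(x, Γ) ≠ ∅), then there exists a finite-index subgroup K of G which is an essential group of periods of x and satisfies Per(x, Γ) ⊆ Per(x, K). -/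
/-!
Replace `Γ` by its normal core `N`, which still has finite index. The right translations `g`
with `Per(x, N, σ) g ⊆ Per(x, N, σ)` for every `σ` form a submonoid containing `N`; as every `g`
has a positive power in `N`, it is a subgroup `K` of finite index, and
`Per(x, K, σ) = Per(x, N, σ)`. Since `N` is normal, `Per(g • x, N, σ) = Per(x, N, σ) g⁻¹`, so
the defining property of `K` is exactly essentiality.
-/

open Pointwise MeasureTheory

theorem Submonoid.inv_mem_of_finiteIndex_le {G : Type*} [Group G] {M : Submonoid G}
    {N : Subgroup G} [N.FiniteIndex] (hNM : N.toSubmonoid ≤ M) {g : G} (hg : g ∈ M) :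
    g⁻¹ ∈ M := by
  obtain ⟨n, hn, -, hgn⟩ := 
    N.exists_pow_mem_of_index_ne_zero Subgroup.FiniteIndex.index_ne_zero g
  obtain ⟨m, rfl⟩ := Nat.exists_eq_add_one_of_ne_zero hn.ne'
  have hinv : g⁻¹ = g ^ m * (g ^ (m + 1))⁻¹ := by
    rw [pow_succ', mul_inv_rev, mul_inv_cancel_left]
  rw [hinv]
  exact M.mul_mem (M.pow_mem hg m) (hNM (N.inv_mem hgn))

section

variable {G A : Type*} [Group G] {x : G → A} {N Γ : Subgroup G} {σ : A}

theorem PerSet.subset_of_le (hNΓ : N ≤ Γ) : PerSet x Γ σ ⊆ PerSet x N σ :=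
  fun _ hh γ hγ => hh γ (hNΓ hγ)

theorem Per.subset_of_le (hNΓ : N ≤ Γ) : Per x Γ ⊆ Per x N :=
  Set.iUnion_mono fun _ => PerSet.subset_of_le hNΓ

theorem PerSet.mul_mem {h n : G} (hh : h ∈ PerSet x N σ) (hn : n ∈ N) :
    h * n ∈ PerSet x N σ := by
  intro γ hγ
  rw [mul_assoc]
  exact hh _ (N.mul_mem hn hγ)

theorem PerSet.mem_smul_iff [N.Normal] {g h : G} :
    h ∈ PerSet (g • x) N σ ↔ h * g ∈ PerSet x N σ := by
  have hconj : ∀ γ, h * (g * γ * g⁻¹) * g = h * g * γ := fun γ => by group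
  constructor
  · intro hh γ hγ
    rw [← hconj]
    exact hh _ (‹N.Normal›.conj_mem γ hγ g)
  · intro hh γ hγ
    have := hh (g⁻¹ * γ * g) (by simpa using ‹N.Normal›.conj_mem γ hγ g⁻¹)
    rwa [← hconj, show g * (g⁻¹ * γ * g) * g⁻¹ = γ by group] at this

variable (x N)

def perPreserving : Submonoid G where
  carrier := {g | ∀ σ, ∀ h ∈ PerSet x N σ, h * g ∈ PerSet x N σ}
  one_mem' _ h hh := by simpa using hh
  mul_mem' ha hb σ h hh := by
    rw [← mul_assoc]
    exact hb σ _ (ha σ h hh)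

theorem le_perPreserving : N.toSubmonoid ≤ perPreserving x N :=
  fun _ hn _ _ hh => PerSet.mul_mem hh hn

def essentialPeriods [N.FiniteIndex] : Subgroup G :=
  { perPreserving x N with
    inv_mem' := (perPreserving x N).inv_mem_of_finiteIndex_le (le_perPreserving x N) }

variable [N.FiniteIndex]

theorem le_essentialPeriods : N ≤ essentialPeriods x N :=
  le_perPreserving x N

theorem perSet_essentialPeriods (σ : A) : PerSet x (essentialPeriods x N) σ = PerSet x N σ := by
  refine (PerSet.subset_of_le (le_essentialPeriods x N)).antisymm fun h hh k hk => ?_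
  simpa using hk σ h hh 1 N.one_mem

theorem per_essentialPeriods : Per x (essentialPeriods x N) = Per x N := by
  simp only [Per, perSet_essentialPeriods]

theorem isEssentialPeriodGroup_essentialPeriods [N.Normal] :
    IsEssentialPeriodGroup x (essentialPeriods x N) := by
  intro g hg σ h hh
  rw [← PerSet.mem_smul_iff]
  rw [← perSet_essentialPeriods] at hh
  exact PerSet.subset_of_le (le_essentialPeriods x N) (hg σ hh)

end

theorem statement15_general {G A : Type*} [Group G]
    (x : G → A) (Γ : Subgroup G) (hfin : Γ.FiniteIndex) :
    ∃ K : Subgroup G, K.FiniteIndex ∧ IsEssentialPeriodGroup x K ∧ Per x Γ ⊆ Per x K := by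
  refine ⟨essentialPeriods x Γ.normalCore, Subgroup.finiteIndex_of_le (le_essentialPeriods x _),
    isEssentialPeriodGroup_essentialPeriods x _, ?_⟩
  rw [per_essentialPeriods]
  exact Per.subset_of_le Γ.normalCore_le

/-- Lemma `esencial`: any finite-index group of periods of `x` is
contained (in the sense of period sets) in an essential group of periods of `x`. -/
theorem statement15 {G A : Type*} [Group G] [Group.FG G] [Finite A]
    (x : G → A) (Γ : Subgroup G) (hfin : Γ.FiniteIndex) (hper : (Per x Γ).Nonempty) :
    ∃ K : Subgroup G, K.FiniteIndex ∧ IsEssentialPeriodGroup x K ∧ Per x Γ ⊆ Per x K :=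
  statement15_general x Γ hfin
end
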